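/- arXiv:2307.09798 — 4 statements merged into one kernel-verified Lean document; each statement's English description precedes it below -/
import Mathlib

section
/- The function F(x) defined by F(x) = 0 for x ≤ 0, F(x) = (x/a)(1 - e^{-λx}) for 0 < x ≤ a, and F(x) = 1 - e^{-λx} for x > a, is a valid cumulative distribution function: it is monotone nondecreasing, right-continuous, tends to 0 at -∞ and to 1 at +∞. -/
open Filter Set

/-- The Max-U-Exp(a, λ) cumulative distribution function. -/
noncomputable def maxUExpCDF (a lam x : ℝ) : ℝ :=
  if x ≤ 0 then 0
  else if x ≤ a then (x / a) * (1 - Real.exp (-lam * x))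
  else 1 - Real.exp (-lam * x)

lemma tail_nonneg (lam : ℝ) (hlam : 0 < lam) {x : ℝ} (hx : 0 ≤ x) :
    0 ≤ 1 - Real.exp (-lam * x) := by
  have : Real.exp (-lam * x) ≤ 1 := by
    rw [Real.exp_le_one_iff]
    nlinarith
  linarith

lemma tail_mono (lam : ℝ) (hlam : 0 < lam) {x y : ℝ} (hxy : x ≤ y) :
    1 - Real.exp (-lam * x) ≤ 1 - Real.exp (-lam * y) := by
  have : Real.exp (-lam * y) ≤ Real.exp (-lam * x) := by
    apply Real.exp_le_exp.2; nlinarith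
  linarith

theorem maxUExpCDF_is_CDF (a lam : ℝ) (ha : 0 < a) (hlam : 0 < lam) :
    Monotone (maxUExpCDF a lam) ∧
    (∀ x : ℝ, ContinuousWithinAt (maxUExpCDF a lam) (Set.Ici x) x) ∧
    Tendsto (maxUExpCDF a lam) atBot (nhds 0) ∧
    Tendsto (maxUExpCDF a lam) atTop (nhds 1) := by
  have ha' : a ≠ 0 := ne_of_gt ha
  set g : ℝ → ℝ := fun y => (y / a) * (1 - Real.exp (-lam * y)) with hg
  set h : ℝ → ℝ := fun y => 1 - Real.exp (-lam * y) with hh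
  have hgc : Continuous g := Continuous.mul (by continuity) (by continuity)
  have hhc : Continuous h := by continuity
  have hF0 : ∀ y : ℝ, 0 ≤ maxUExpCDF a lam y := by
    intro y
    unfold maxUExpCDF
    by_cases h1 : y ≤ 0
    · rw [if_pos h1]
    · push_neg at h1
      rw [if_neg (not_le.2 h1)]
      by_cases h2 : y ≤ a
      · rw [if_pos h2]
        exact mul_nonneg (div_nonneg h1.le ha.le) (tail_nonneg lam hlam h1.le)
      · rw [if_neg h2]
        exact tail_nonneg lam hlam h1.le
  refine ⟨?_, ?_, ?_, ?_⟩
  · -- monotone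
    intro x y hxy
    by_cases hx0 : x ≤ 0
    · conv_lhs => unfold maxUExpCDF
      rw [if_pos hx0]
      exact hF0 y
    · push_neg at hx0
      have hy0 : ¬ y ≤ 0 := not_le.2 (hx0.trans_le hxy)
      unfold maxUExpCDF
      rw [if_neg (not_le.2 hx0), if_neg hy0]
      by_cases hxa : x ≤ a
      · rw [if_pos hxa]
        by_cases hya : y ≤ a
        · rw [if_pos hya]
          exact mul_le_mul (by gcongr)
            (tail_mono lam hlam hxy) (tail_nonneg lam hlam hx0.le)
            (div_nonneg (hx0.le.trans hxy) ha.le)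
        · rw [if_neg hya]
          calc (x / a) * (1 - Real.exp (-lam * x))
              ≤ 1 * (1 - Real.exp (-lam * x)) := by
                apply mul_le_mul_of_nonneg_right _ (tail_nonneg lam hlam hx0.le)
                rw [div_le_one ha]; exact hxa
            _ = 1 - Real.exp (-lam * x) := one_mul _
            _ ≤ 1 - Real.exp (-lam * y) := tail_mono lam hlam hxy
      · have hya : ¬ y ≤ a := fun hy => hxa (hxy.trans hy)
        rw [if_neg hxa, if_neg hya]
        exact tail_mono lam hlam hxy
  · -- right continuity
    have key_a : ContinuousWithinAt (maxUExpCDF a lam) (Ici a) a := by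
      apply ContinuousWithinAt.congr (hhc.continuousWithinAt (s := Ici a))
      · intro y hy
        have hy' : (a : ℝ) ≤ y := hy
        unfold maxUExpCDF
        rw [if_neg (not_le.2 (lt_of_lt_of_le ha hy'))]
        by_cases hya : y ≤ a
        · have : y = a := le_antisymm hya hy'
          subst this
          rw [if_pos le_rfl, div_self ha', one_mul]
        · rw [if_neg hya]
      · unfold maxUExpCDF
        rw [if_neg (not_le.2 ha), if_pos le_rfl, div_self ha', one_mul]
    intro x
    rcases lt_trichotomy x 0 with hx | hx | hx
    · have heq : maxUExpCDF a lam =ᶠ[nhds x] fun _ => (0 : ℝ) := by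
        filter_upwards [Iio_mem_nhds hx] with y hy
        unfold maxUExpCDF
        rw [if_pos (le_of_lt hy)]
      exact (continuousAt_const.congr heq.symm).continuousWithinAt
    · subst hx
      apply ContinuousWithinAt.congr_of_eventuallyEq (hgc.continuousWithinAt (s := Ici 0))
      · have hmem : Iic a ∈ nhdsWithin (0:ℝ) (Ici 0) :=
          nhdsWithin_le_nhds (Iic_mem_nhds ha)
        filter_upwards [hmem, self_mem_nhdsWithin] with y hya hy0
        have hya' : y ≤ a := hya
        have hy0' : (0:ℝ) ≤ y := hy0
        by_cases hy : y ≤ 0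
        · have : y = 0 := le_antisymm hy hy0'
          subst this
          simp [maxUExpCDF, hg]
        · unfold maxUExpCDF
          rw [if_neg hy, if_pos hya']
      · simp [maxUExpCDF, hg]
    · rcases lt_trichotomy x a with hxa | hxa | hxa
      · have heq : maxUExpCDF a lam =ᶠ[nhds x] g := by
          filter_upwards [Ioo_mem_nhds hx hxa] with y hy
          unfold maxUExpCDF
          rw [if_neg (not_le.2 hy.1), if_pos hy.2.le]
        exact (hgc.continuousAt.congr heq.symm).continuousWithinAt
      · rw [hxa]; exact key_a
      · have heq : maxUExpCDF a lam =ᶠ[nhds x] h := by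
          filter_upwards [Ioi_mem_nhds hxa] with y hy
          unfold maxUExpCDF
          rw [if_neg (not_le.2 (ha.trans hy)), if_neg (not_le.2 hy)]
        exact (hhc.continuousAt.congr heq.symm).continuousWithinAt
  · -- atBot
    apply Tendsto.congr' _ tendsto_const_nhds
    filter_upwards [eventually_le_atBot 0] with y hy
    unfold maxUExpCDF
    rw [if_pos hy]
  · -- atTop
    have hlim : Tendsto h atTop (nhds 1) := by
      have h1 : Tendsto (fun y : ℝ => Real.exp (-lam * y)) atTop (nhds 0) := by
        have h2 : Tendsto (fun y : ℝ => lam * y) atTop atTop :=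
          Tendsto.const_mul_atTop hlam tendsto_id
        have := Real.tendsto_exp_neg_atTop_nhds_zero.comp h2
        refine this.congr fun y => ?_
        simp [neg_mul, Function.comp]
      have := h1.const_sub 1
      simpa [hh] using this
    apply Tendsto.congr' _ hlim
    filter_upwards [eventually_gt_atTop a] with y hy
    unfold maxUExpCDF
    rw [if_neg (not_le.2 (ha.trans hy)), if_neg (not_le.2 hy)]
end

section
/- If ξ has the Max-U-Exp(a, λ) distribution, then E[ξ] = a/2 + (1/(aλ²))(1 - e^{-λa}). -/
/-!
Split the integral at `a`. On both pieces the integrand is a polynomial times `e^{-λx}`, which has an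
antiderivative of the same shape `q(x) e^{-λx}` with `q' - λ q` equal to the polynomial; the
fundamental theorem of calculus then evaluates each piece, the boundary term at `∞` vanishing
because `e^{-λx}` beats any affine function.
-/

open MeasureTheory Set Filter Topology Real

/-- The Max-U-Exp(a, λ) probability density function. -/
noncomputable def maxUExpPDF (a lam x : ℝ) : ℝ :=
  if x ≤ 0 then 0
  else if x ≤ a then (1 / a) * (1 - Real.exp (-lam * x) + lam * x * Real.exp (-lam * x))
  else lam * Real.exp (-lam * x)

section ExpNegMul

variable {lam : ℝ}

theorem hasDerivAt_mul_exp_neg_mul {p : ℝ → ℝ} {p' x : ℝ} (hp : HasDerivAt p p' x) :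
    HasDerivAt (fun y => p y * exp (-lam * y)) ((p' - lam * p x) * exp (-lam * x)) x := by
  have he : HasDerivAt (fun y => exp (-lam * y)) (exp (-lam * x) * -lam) x := by
    simpa using ((hasDerivAt_id x).const_mul (-lam)).exp
  exact (hp.mul he).congr_deriv (by ring)

theorem tendsto_affine_mul_exp_neg_mul_atTop (hlam : 0 < lam) (b c : ℝ) :
    Tendsto (fun x => (b * x + c) * exp (-lam * x)) atTop (𝓝 0) := by
  have hx : Tendsto (fun x => x * exp (-lam * x)) atTop (𝓝 0) := by
    simpa using tendsto_rpow_mul_exp_neg_mul_atTop_nhds_zero 1 lam hlam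
  have he : Tendsto (fun x => exp (-lam * x)) atTop (𝓝 0) :=
    tendsto_exp_atBot.comp (tendsto_id.const_mul_atTop_of_neg (neg_neg_of_pos hlam))
  simpa [add_mul, mul_assoc] using (hx.const_mul b).add (he.const_mul c)

theorem hasDerivAt_neg_add_inv_mul_exp_neg_mul (hlam : lam ≠ 0) (x : ℝ) :
    HasDerivAt (fun y => (-1 * y + -lam⁻¹) * exp (-lam * y)) (x * (lam * exp (-lam * x))) x := by
  have hp : HasDerivAt (fun y : ℝ => -1 * y + -lam⁻¹) (-1) x := by
    simpa using ((hasDerivAt_id x).const_mul (-1)).add_const (-lam⁻¹)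
  exact (hasDerivAt_mul_exp_neg_mul hp).congr_deriv (by field_simp; ring)

theorem integrableOn_Ioi_mul_exp_neg_mul (hlam : 0 < lam) {c : ℝ} (hc : 0 ≤ c) :
    IntegrableOn (fun x => x * (lam * exp (-lam * x))) (Ioi c) :=
  integrableOn_Ioi_deriv_of_nonneg' (fun x _ => hasDerivAt_neg_add_inv_mul_exp_neg_mul hlam.ne' x)
    (fun x hx => by have := hc.trans hx.le; positivity)
    (tendsto_affine_mul_exp_neg_mul_atTop hlam _ _)

theorem integral_Ioi_mul_exp_neg_mul (hlam : 0 < lam) {c : ℝ} (hc : 0 ≤ c) :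
    ∫ x in Ioi c, x * (lam * exp (-lam * x)) = (c + lam⁻¹) * exp (-lam * c) := by
  rw [integral_Ioi_of_hasDerivAt_of_nonneg'
    (fun x _ => hasDerivAt_neg_add_inv_mul_exp_neg_mul hlam.ne' x)
    (fun x hx => by have := hc.trans hx.le; positivity)
    (tendsto_affine_mul_exp_neg_mul_atTop hlam _ _)]
  ring

theorem integral_mul_one_sub_exp_neg_mul_add (hlam : lam ≠ 0) (b : ℝ) :
    ∫ x in (0 : ℝ)..b, x * (1 - exp (-lam * x) + lam * x * exp (-lam * x)) =
      b ^ 2 / 2 - (b ^ 2 + b / lam + 1 / lam ^ 2) * exp (-lam * b) + 1 / lam ^ 2 := by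
  have hp : ∀ x : ℝ, HasDerivAt (fun y => y ^ 2 + y / lam + 1 / lam ^ 2) (2 * x + 1 / lam) x := by
    intro x
    simpa using ((hasDerivAt_pow 2 x).add ((hasDerivAt_id x).div_const lam)).add_const
      (1 / lam ^ 2)
  have hderiv : ∀ x : ℝ, HasDerivAt
      (fun y => y ^ 2 / 2 - (y ^ 2 + y / lam + 1 / lam ^ 2) * exp (-lam * y))
      (x * (1 - exp (-lam * x) + lam * x * exp (-lam * x))) x := by
    intro x
    exact (((hasDerivAt_pow 2 x).div_const 2).sub (hasDerivAt_mul_exp_neg_mul (hp x))).congr_deriv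
      (by field_simp; ring)
  rw [intervalIntegral.integral_eq_sub_of_hasDerivAt (fun x _ => hderiv x)
    (Continuous.intervalIntegrable (by fun_prop) _ _)]
  simp

end ExpNegMul

theorem maxUExpPDF_of_mem_Ioc {a lam x : ℝ} (hx : x ∈ Ioc 0 a) :
    maxUExpPDF a lam x = 1 / a * (1 - exp (-lam * x) + lam * x * exp (-lam * x)) := by
  simp [maxUExpPDF, not_le.mpr hx.1, hx.2]

theorem maxUExpPDF_of_lt {a lam x : ℝ} (ha : 0 ≤ a) (hx : a < x) :
    maxUExpPDF a lam x = lam * exp (-lam * x) := by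
  simp [maxUExpPDF, not_le.mpr (ha.trans_lt hx), not_le.mpr hx]

theorem maxUExp_mean (a lam : ℝ) (ha : 0 < a) (hlam : 0 < lam) :
    (∫ x in Set.Ioi (0 : ℝ), x * maxUExpPDF a lam x) =
      a / 2 + (1 / (a * lam ^ 2)) * (1 - Real.exp (-lam * a)) := by
  have hfront : EqOn (fun x => x * maxUExpPDF a lam x)
      (fun x => 1 / a * (x * (1 - exp (-lam * x) + lam * x * exp (-lam * x)))) (Ioc 0 a) :=
    fun x hx => by simp only [maxUExpPDF_of_mem_Ioc hx]; ring
  have htail : EqOn (fun x => x * maxUExpPDF a lam x)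
      (fun x => x * (lam * exp (-lam * x))) (Ioi a) :=
    fun x hx => by simp only [maxUExpPDF_of_lt ha.le hx]
  have hfrontInt : IntegrableOn (fun x => x * maxUExpPDF a lam x) (Ioc 0 a) :=
    (Continuous.integrableOn_Ioc (by fun_prop)).congr_fun hfront.symm measurableSet_Ioc
  have htailInt : IntegrableOn (fun x => x * maxUExpPDF a lam x) (Ioi a) :=
    (integrableOn_Ioi_mul_exp_neg_mul hlam ha.le).congr_fun htail.symm measurableSet_Ioi
  rw [← Ioc_union_Ioi_eq_Ioi ha.le,
    setIntegral_union (Ioc_disjoint_Ioi le_rfl) measurableSet_Ioi hfrontInt htailInt,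
    setIntegral_congr_fun measurableSet_Ioc hfront, setIntegral_congr_fun measurableSet_Ioi htail,
    integral_const_mul, ← intervalIntegral.integral_of_le ha.le,
    integral_mul_one_sub_exp_neg_mul_add hlam.ne', integral_Ioi_mul_exp_neg_mul hlam ha.le]
  field_simp
  ring
end

section
/- If ξ has the Max-U-Exp(a, λ) distribution, then its variance is Var(ξ) = a²/12 - (1/λ²)(1 + e^{-λa}) + (4/(aλ³))(1 - e^{-λa}) - (1/(a²λ⁴))(1 - e^{-λa})². -/
/-
Split each moment integral at `a`. On `(0, a]` the integrand `x ^ k * maxUExpPDF a lam x` is a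
monomial plus a polynomial times `exp (-lam * x)`, on `(a, ∞)` a polynomial times
`exp (-lam * x)`; both have explicit antiderivatives of the form `(cubic) * exp (-lam * x)` (plus a
monomial on `(0, a]`) that vanish at infinity, so the fundamental theorem of calculus, in its
improper form on the tail, computes the first two moments, and the variance is then algebra.
-/

open MeasureTheory Set

open Real Filter Topology

lemma tendsto_pow_mul_exp_neg_mul_atTop {lam : ℝ} (hlam : 0 < lam) (n : ℕ) :
    Tendsto (fun x : ℝ => x ^ n * exp (-lam * x)) atTop (𝓝 0) := by
  simpa only [rpow_natCast] using tendsto_rpow_mul_exp_neg_mul_atTop_nhds_zero n lam hlam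

section CubicTimesExp

variable (c₀ c₁ c₂ c₃ : ℝ)

lemma hasDerivAt_cubic_mul_exp (lam x : ℝ) :
    HasDerivAt (fun y => (c₀ + c₁ * y + c₂ * y ^ 2 + c₃ * y ^ 3) * exp (-lam * y))
      ((c₁ - lam * c₀ + (2 * c₂ - lam * c₁) * x + (3 * c₃ - lam * c₂) * x ^ 2 - lam * c₃ * x ^ 3)
        * exp (-lam * x)) x := by
  have hpoly : HasDerivAt (fun y => c₀ + c₁ * y + c₂ * y ^ 2 + c₃ * y ^ 3)
      (c₁ + c₂ * (2 * x) + c₃ * (3 * x ^ 2)) x := by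
    refine ((((hasDerivAt_id' x).const_mul c₁).const_add c₀).add
      ((hasDerivAt_pow 2 x).const_mul c₂)).add ((hasDerivAt_pow 3 x).const_mul c₃) |>.congr_deriv ?_
    norm_num
  have hexp : HasDerivAt (fun y => exp (-lam * y)) (exp (-lam * x) * (-lam * 1)) x :=
    ((hasDerivAt_id' x).const_mul (-lam)).exp
  exact (hpoly.mul hexp).congr_deriv (by ring)

lemma tendsto_cubic_mul_exp_atTop {lam : ℝ} (hlam : 0 < lam) :
    Tendsto (fun y => (c₀ + c₁ * y + c₂ * y ^ 2 + c₃ * y ^ 3) * exp (-lam * y)) atTop (𝓝 0) := by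
  have h := fun n => tendsto_pow_mul_exp_neg_mul_atTop hlam n
  convert ((((h 0).const_mul c₀).add ((h 1).const_mul c₁)).add
    ((h 2).const_mul c₂)).add ((h 3).const_mul c₃) using 2
  · ring
  · simp

lemma integrableOn_Ioi_and_integral_Ioi_cubic_mul_exp_deriv {lam : ℝ} (hlam : 0 < lam) {a : ℝ}
    {f : ℝ → ℝ} (hf : ∀ x, f x = (c₁ - lam * c₀ + (2 * c₂ - lam * c₁) * x
      + (3 * c₃ - lam * c₂) * x ^ 2 - lam * c₃ * x ^ 3) * exp (-lam * x))
    (hf_nonneg : ∀ x ∈ Ioi a, 0 ≤ f x) :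
    IntegrableOn f (Ioi a) ∧
      ∫ x in Ioi a, f x = -((c₀ + c₁ * a + c₂ * a ^ 2 + c₃ * a ^ 3) * exp (-lam * a)) := by
  have hderiv : ∀ x ∈ Ici a, HasDerivAt
      (fun y => (c₀ + c₁ * y + c₂ * y ^ 2 + c₃ * y ^ 3) * exp (-lam * y)) (f x) x :=
    fun x _ => hf x ▸ hasDerivAt_cubic_mul_exp c₀ c₁ c₂ c₃ lam x
  have hlim := tendsto_cubic_mul_exp_atTop c₀ c₁ c₂ c₃ hlam
  exact ⟨integrableOn_Ioi_deriv_of_nonneg' hderiv hf_nonneg hlim,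
    (integral_Ioi_of_hasDerivAt_of_nonneg' hderiv hf_nonneg hlim).trans (zero_sub _)⟩

end CubicTimesExp

section Moments

variable {a lam : ℝ}

lemma integral_Ioi_mul_maxUExpPDF_eq_add (ha : 0 < a) {g : ℝ → ℝ} (hg : Continuous g)
    (htail : IntegrableOn (fun x => g x * (lam * exp (-lam * x))) (Ioi a)) :
    ∫ x in Ioi 0, g x * maxUExpPDF a lam x =
      (∫ x in 0..a, g x * ((1 / a) * (1 - exp (-lam * x) + lam * x * exp (-lam * x))))
        + ∫ x in Ioi a, g x * (lam * exp (-lam * x)) := by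
  have hbody : EqOn (fun x => g x * maxUExpPDF a lam x)
      (fun x => g x * ((1 / a) * (1 - exp (-lam * x) + lam * x * exp (-lam * x)))) (Ioc 0 a) :=
    fun x hx => by simp only [maxUExpPDF, if_neg (not_le.mpr hx.1), if_pos hx.2]
  have htail_eq : EqOn (fun x => g x * maxUExpPDF a lam x)
      (fun x => g x * (lam * exp (-lam * x))) (Ioi a) :=
    fun x hx => by
      simp only [maxUExpPDF, if_neg (not_le.mpr (ha.trans hx)), if_neg (not_le.mpr hx.out)]
  have hbody_int : IntegrableOn (fun x => g x * maxUExpPDF a lam x) (Ioc 0 a) :=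
    ((by fun_prop : Continuous _).integrableOn_Icc.mono_set Ioc_subset_Icc_self).congr_fun
      hbody.symm measurableSet_Ioc
  rw [← Ioc_union_Ioi_eq_Ioi ha.le, setIntegral_union (Ioc_disjoint_Ioi le_rfl) measurableSet_Ioi
      hbody_int (htail.congr_fun htail_eq.symm measurableSet_Ioi),
    setIntegral_congr_fun measurableSet_Ioc hbody, setIntegral_congr_fun measurableSet_Ioi htail_eq,
    intervalIntegral.integral_of_le ha.le]

lemma integral_Ioi_mul_maxUExpPDF (ha : 0 < a) (hlam : 0 < lam) :
    ∫ x in Ioi 0, x * maxUExpPDF a lam x = a / 2 + (1 - exp (-lam * a)) / (a * lam ^ 2) := by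
  obtain ⟨htail_int, htail⟩ := integrableOn_Ioi_and_integral_Ioi_cubic_mul_exp_deriv
    (-(1 / lam)) (-1) 0 0 hlam (f := fun x => x * (lam * exp (-lam * x)))
    (fun x => by field_simp; ring) (fun x hx => by have := ha.trans hx; positivity)
  have hbody : ∀ x ∈ uIcc 0 a, HasDerivAt
      (fun y => y ^ 2 / (2 * a) + (1 / a) *
        ((-(1 / lam ^ 2) + -(1 / lam) * y + (-1) * y ^ 2 + 0 * y ^ 3) * exp (-lam * y)))
      (x * ((1 / a) * (1 - exp (-lam * x) + lam * x * exp (-lam * x)))) x := fun x _ =>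
    (((hasDerivAt_pow 2 x).div_const _).add
      ((hasDerivAt_cubic_mul_exp _ _ _ _ lam x).const_mul _)).congr_deriv (by field_simp; ring)
  rw [integral_Ioi_mul_maxUExpPDF_eq_add ha continuous_id' htail_int, htail,
    intervalIntegral.integral_eq_sub_of_hasDerivAt hbody
      ((by fun_prop : Continuous _).intervalIntegrable _ _)]
  simp only [mul_zero, exp_zero]
  field_simp
  ring

lemma integral_Ioi_sq_mul_maxUExpPDF (ha : 0 < a) (hlam : 0 < lam) :
    ∫ x in Ioi 0, x ^ 2 * maxUExpPDF a lam x =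
      a ^ 2 / 3 + 4 / (a * lam ^ 3) - (2 / lam ^ 2 + 4 / (a * lam ^ 3)) * exp (-lam * a) := by
  obtain ⟨htail_int, htail⟩ := integrableOn_Ioi_and_integral_Ioi_cubic_mul_exp_deriv
    (-(2 / lam ^ 2)) (-(2 / lam)) (-1) 0 hlam (f := fun x => x ^ 2 * (lam * exp (-lam * x)))
    (fun x => by field_simp; ring) (fun x _ => by positivity)
  have hbody : ∀ x ∈ uIcc 0 a, HasDerivAt
      (fun y => y ^ 3 / (3 * a) + (1 / a) *
        ((-(4 / lam ^ 3) + -(4 / lam ^ 2) * y + -(2 / lam) * y ^ 2 + (-1) * y ^ 3) * exp (-lam * y)))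
      (x ^ 2 * ((1 / a) * (1 - exp (-lam * x) + lam * x * exp (-lam * x)))) x := fun x _ =>
    (((hasDerivAt_pow 3 x).div_const _).add
      ((hasDerivAt_cubic_mul_exp _ _ _ _ lam x).const_mul _)).congr_deriv (by field_simp; ring)
  rw [integral_Ioi_mul_maxUExpPDF_eq_add ha (continuous_pow 2) htail_int, htail,
    intervalIntegral.integral_eq_sub_of_hasDerivAt hbody
      ((by fun_prop : Continuous _).intervalIntegrable _ _)]
  simp only [mul_zero, exp_zero]
  field_simp
  ring

end Moments

theorem maxUExp_variance (a lam : ℝ) (ha : 0 < a) (hlam : 0 < lam) :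
    (∫ x in Set.Ioi (0 : ℝ), x ^ 2 * maxUExpPDF a lam x)
      - (∫ x in Set.Ioi (0 : ℝ), x * maxUExpPDF a lam x) ^ 2 =
      a ^ 2 / 12 - (1 / lam ^ 2) * (1 + Real.exp (-lam * a))
        + (4 / (a * lam ^ 3)) * (1 - Real.exp (-lam * a))
        - (1 / (a ^ 2 * lam ^ 4)) * (1 - Real.exp (-lam * a)) ^ 2 := by
  rw [integral_Ioi_sq_mul_maxUExpPDF ha hlam, integral_Ioi_mul_maxUExpPDF ha hlam]
  field_simp
  ring
end

section
/- The function q(t) defined for t > 0 by q(t) = (1/(at²))(1 - e^{-at} - a t e^{-at}) + ((λ - t)/(a(λ+t)³))(1 - e^{-a(λ+t)}) + (t/(λ+t)²) e^{-a(λ+t)}, and q(t) = 0 for t ≤ 0, is nonnegative and integrates to 1; that is, it is a probability density function (the Exp-Max-U-Exp(a, λ) density). -/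
/-!
The function `F(t) = 1 - (1 - e^{-at})/(at) + t (1 - e^{-a(λ+t)})/(a(λ+t)²)` (and `F = 0` on
`t ≤ 0`) is an antiderivative of `q` on `(0, ∞)` with `F(0⁺) = 0` and `F(∞) = 1`, so `∫ q = 1`.
For nonnegativity, view `a q(t)` as a function of the rate `a`: it vanishes at `a = 0` and its
`a`-derivative `a e^{-at} + λ/(λ+t)² e^{-a(λ+t)} - a t/(λ+t) e^{-a(λ+t)}` is nonnegative, because
`t/(λ+t) ≤ 1` and `e^{-a(λ+t)} ≤ e^{-at}`.
-/

open MeasureTheory Set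

/-- The Exp-Max-U-Exp(a, λ) probability density function. -/
noncomputable def expMaxUExpPDF (a lam t : ℝ) : ℝ :=
  if t ≤ 0 then 0
  else (1 / (a * t ^ 2)) * (1 - Real.exp (-a * t) - a * t * Real.exp (-a * t))
    + ((lam - t) / (a * (lam + t) ^ 3)) * (1 - Real.exp (-a * (lam + t)))
    + (t / (lam + t) ^ 2) * Real.exp (-a * (lam + t))

open Filter Topology Real

lemma hasDerivAt_exp_neg_mul (c x : ℝ) :
    HasDerivAt (fun y => exp (-c * y)) (-c * exp (-c * x)) x := by
  simpa [mul_comm] using ((hasDerivAt_id x).const_mul (-c)).exp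

lemma hasDerivAt_exp_neg_mul_add (c d x : ℝ) :
    HasDerivAt (fun y => exp (-c * (d + y))) (-c * exp (-c * (d + x))) x := by
  simpa [add_comm] using (hasDerivAt_exp_neg_mul c (x + d)).comp_add_const x d

lemma tendsto_one_sub_exp_neg_mul_div {c : ℝ} (hc : c ≠ 0) :
    Tendsto (fun x => (1 - exp (-c * x)) / (c * x)) (𝓝[≠] 0) (𝓝 1) := by
  have hslope := (((hasDerivAt_exp_neg_mul c 0).const_sub 1).tendsto_slope_zero).div_const c
  simp only [mul_zero, exp_zero, mul_one, neg_neg, div_self hc, zero_add, smul_eq_mul] at hslope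
  refine hslope.congr' (Eventually.of_forall fun x => ?_)
  rw [sub_self, sub_zero, inv_mul_eq_div, div_div, mul_comm x]

noncomputable def expMaxUExpCDF (a lam t : ℝ) : ℝ :=
  if t ≤ 0 then 0
  else 1 - (1 - exp (-a * t)) / (a * t) + t * (1 - exp (-a * (lam + t))) / (a * (lam + t) ^ 2)

lemma hasDerivAt_expMaxUExpCDF {a lam t : ℝ} (ha : a ≠ 0) (ht : 0 < t) (hlt : lam + t ≠ 0) :
    HasDerivAt (expMaxUExpCDF a lam) (expMaxUExpPDF a lam t) t := by
  have hfirst := ((hasDerivAt_exp_neg_mul a t).const_sub 1).div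
    ((hasDerivAt_id t).const_mul a) (mul_ne_zero ha ht.ne')
  have hsecond := ((hasDerivAt_id t).mul ((hasDerivAt_exp_neg_mul_add a lam t).const_sub 1)).div
    ((((hasDerivAt_id t).const_add lam).pow 2).const_mul a) (mul_ne_zero ha (pow_ne_zero 2 hlt))
  have hCDF : expMaxUExpCDF a lam =ᶠ[𝓝 t] fun x =>
      1 - (1 - exp (-a * x)) / (a * x) + x * (1 - exp (-a * (lam + x))) / (a * (lam + x) ^ 2) := by
    filter_upwards [eventually_gt_nhds ht] with x hx
    rw [expMaxUExpCDF, if_neg hx.not_ge]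
  refine ((hfirst.const_sub 1).add hsecond).congr_of_eventuallyEq hCDF |>.congr_deriv ?_
  rw [expMaxUExpPDF, if_neg ht.not_ge]
  simp only [id, Pi.pow_apply, Pi.mul_apply]
  generalize exp (-a * t) = E₁
  generalize exp (-a * (lam + t)) = E₂
  field_simp
  ring

lemma tendsto_expMaxUExpCDF_nhdsGT_zero {a lam : ℝ} (ha : a ≠ 0) (hlam : lam ≠ 0) :
    Tendsto (expMaxUExpCDF a lam) (𝓝[>] 0) (𝓝 0) := by
  have hfirst := (tendsto_one_sub_exp_neg_mul_div ha).mono_left (nhdsGT_le_nhdsNE (0 : ℝ))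
  have hsecond : ContinuousAt
      (fun x => x * (1 - exp (-a * (lam + x))) / (a * (lam + x) ^ 2)) 0 := by
    fun_prop (disch := simpa using mul_ne_zero ha (pow_ne_zero 2 hlam))
  have hlim := (tendsto_const_nhds (x := (1 : ℝ))).sub hfirst |>.add
    (hsecond.tendsto.mono_left nhdsWithin_le_nhds)
  simp only [sub_self, zero_mul, zero_div, add_zero] at hlim
  refine hlim.congr' ?_
  filter_upwards [self_mem_nhdsWithin] with x hx
  rw [expMaxUExpCDF, if_neg (not_le.2 hx)]

lemma tendsto_div_add_sq_atTop (c : ℝ) : Tendsto (fun t => t / (c + t) ^ 2) atTop (𝓝 0) := by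
  have hu : Tendsto (fun u : ℝ => u⁻¹ - c * (u ^ 2)⁻¹) atTop (𝓝 0) := by
    simpa using tendsto_inv_atTop_zero.sub
      ((tendsto_inv_atTop_zero.comp (tendsto_pow_atTop two_ne_zero)).const_mul c)
  refine (hu.comp (tendsto_atTop_add_const_left _ c tendsto_id)).congr' ?_
  filter_upwards [eventually_gt_atTop (-c)] with t ht
  have : c + t ≠ 0 := by linarith
  simp only [Function.comp, id]
  field_simp
  ring

lemma tendsto_expMaxUExpCDF_atTop {a : ℝ} (ha : 0 < a) (lam : ℝ) :
    Tendsto (expMaxUExpCDF a lam) atTop (𝓝 1) := by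
  have hexp : ∀ c : ℝ, Tendsto (fun x => 1 - exp (-a * (c + x))) atTop (𝓝 1) := fun c => by
    simpa using tendsto_const_nhds.sub (tendsto_exp_atBot.comp
      ((tendsto_atTop_add_const_left _ c tendsto_id).const_mul_atTop_of_neg (neg_neg_of_pos ha)))
  have hfirst : Tendsto (fun t => (1 - exp (-a * t)) / (a * t)) atTop (𝓝 0) := by
    simpa using (hexp 0).div_atTop (tendsto_id.const_mul_atTop ha)
  have hsecond := ((tendsto_div_add_sq_atTop lam).mul (hexp lam)).div_const a
  have hlim := (tendsto_const_nhds (x := (1 : ℝ))).sub hfirst |>.add hsecond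
  simp only [sub_zero, zero_mul, zero_div, add_zero] at hlim
  refine hlim.congr' ?_
  filter_upwards [eventually_gt_atTop 0] with t ht
  rw [expMaxUExpCDF, if_neg ht.not_ge, div_mul_eq_mul_div, div_div, mul_comm ((lam + t) ^ 2)]

/-- `s * expMaxUExpPDF s lam t` for `t > 0`, written so that it is smooth in the rate `s`. -/
noncomputable def rateMulExpMaxUExpPDF (lam t s : ℝ) : ℝ :=
  (1 - exp (-t * s) - s * t * exp (-t * s)) / t ^ 2
    + (lam - t) / (lam + t) ^ 3 * (1 - exp (-(lam + t) * s))
    + s * t / (lam + t) ^ 2 * exp (-(lam + t) * s)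

lemma rateMulExpMaxUExpPDF_eq {lam t s : ℝ} (ht : 0 < t) (hs : s ≠ 0) :
    rateMulExpMaxUExpPDF lam t s = s * expMaxUExpPDF s lam t := by
  rw [rateMulExpMaxUExpPDF, expMaxUExpPDF, if_neg ht.not_ge, mul_comm (-t), mul_comm (-(lam + t)),
    neg_mul_comm, neg_mul_comm s]
  field_simp

lemma hasDerivAt_rateMulExpMaxUExpPDF {lam t : ℝ} (ht : t ≠ 0) (hlt : lam + t ≠ 0) (s : ℝ) :
    HasDerivAt (rateMulExpMaxUExpPDF lam t)
      (s * exp (-t * s) + lam / (lam + t) ^ 2 * exp (-(lam + t) * s)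
        - s * t / (lam + t) * exp (-(lam + t) * s)) s := by
  have h₁ := hasDerivAt_exp_neg_mul t s
  have h₂ := hasDerivAt_exp_neg_mul (lam + t) s
  have h := ((((h₁.const_sub 1).sub (((hasDerivAt_id s).mul_const t).mul h₁)).div_const (t ^ 2)).add
    ((h₂.const_sub 1).const_mul ((lam - t) / (lam + t) ^ 3))).add
    ((((hasDerivAt_id s).mul_const t).div_const ((lam + t) ^ 2)).mul h₂)
  refine h.congr_deriv ?_
  simp only [id]
  field_simp
  ring

lemma rateMulExpMaxUExpPDF_deriv_nonneg {lam t s : ℝ} (hlam : 0 ≤ lam) (ht : 0 < t) (hs : 0 ≤ s) :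
    0 ≤ s * exp (-t * s) + lam / (lam + t) ^ 2 * exp (-(lam + t) * s)
      - s * t / (lam + t) * exp (-(lam + t) * s) := by
  have hlt : 0 < lam + t := by linarith
  have hexp : exp (-(lam + t) * s) ≤ exp (-t * s) := exp_le_exp.2 (by nlinarith)
  have hfrac : t / (lam + t) ≤ 1 := (div_le_one hlt).2 (by linarith)
  have hle : s * t / (lam + t) * exp (-(lam + t) * s) ≤ s * exp (-t * s) :=
    calc s * t / (lam + t) * exp (-(lam + t) * s)
        = s * (t / (lam + t) * exp (-(lam + t) * s)) := by ring
      _ ≤ s * exp (-t * s) := by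
        gcongr; exact (mul_le_of_le_one_left (exp_nonneg _) hfrac).trans hexp
  have hlam_term : 0 ≤ lam / (lam + t) ^ 2 * exp (-(lam + t) * s) := by positivity
  linarith

lemma rateMulExpMaxUExpPDF_nonneg {lam t s : ℝ} (hlam : 0 ≤ lam) (ht : 0 < t) (hs : 0 ≤ s) :
    0 ≤ rateMulExpMaxUExpPDF lam t s := by
  have hlt : lam + t ≠ 0 := by linarith
  have hmono : MonotoneOn (rateMulExpMaxUExpPDF lam t) (Ici 0) :=
    monotoneOn_of_hasDerivWithinAt_nonneg (convex_Ici 0)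
      (fun x _ => (hasDerivAt_rateMulExpMaxUExpPDF ht.ne' hlt x).continuousAt.continuousWithinAt)
      (fun x _ => (hasDerivAt_rateMulExpMaxUExpPDF ht.ne' hlt x).hasDerivWithinAt)
      (fun x hx => rateMulExpMaxUExpPDF_deriv_nonneg hlam ht (interior_subset hx))
  simpa [rateMulExpMaxUExpPDF] using hmono self_mem_Ici hs hs

lemma expMaxUExpPDF_nonneg {a lam : ℝ} (ha : 0 < a) (hlam : 0 ≤ lam) (t : ℝ) :
    0 ≤ expMaxUExpPDF a lam t := by
  rcases le_or_gt t 0 with ht | ht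
  · rw [expMaxUExpPDF, if_pos ht]
  · have h := rateMulExpMaxUExpPDF_nonneg hlam ht ha.le
    rw [rateMulExpMaxUExpPDF_eq ht ha.ne'] at h
    exact nonneg_of_mul_nonneg_right (by linarith) ha

theorem expMaxUExpPDF_is_pdf (a lam : ℝ) (ha : 0 < a) (hlam : 0 < lam) :
    (∀ t : ℝ, 0 ≤ expMaxUExpPDF a lam t) ∧ (∫ t : ℝ, expMaxUExpPDF a lam t) = 1 := by
  refine ⟨expMaxUExpPDF_nonneg ha hlam.le, ?_⟩
  have hCDF_zero : expMaxUExpCDF a lam 0 = 0 := if_pos le_rfl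
  have hcont : ContinuousWithinAt (expMaxUExpCDF a lam) (Ici 0) 0 := by
    rw [← continuousWithinAt_Ioi_iff_Ici, ContinuousWithinAt, hCDF_zero]
    exact tendsto_expMaxUExpCDF_nhdsGT_zero ha.ne' hlam.ne'
  have hsupp : ∀ t ∉ Ioi (0 : ℝ), expMaxUExpPDF a lam t = 0 := fun t ht =>
    if_pos (not_lt.1 ht)
  rw [← setIntegral_eq_integral_of_forall_compl_eq_zero hsupp,
    integral_Ioi_of_hasDerivAt_of_nonneg hcont
      (fun t ht => hasDerivAt_expMaxUExpCDF ha.ne' ht (by linarith [mem_Ioi.1 ht]))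
      (fun t _ => expMaxUExpPDF_nonneg ha hlam.le t) (tendsto_expMaxUExpCDF_atTop ha lam),
    hCDF_zero, sub_zero]
end
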